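/- arXiv:0809.3507 — 2 statements merged into one kernel-verified Lean document; each statement's English description precedes it below -/
import Mathlib

section
/- Let a₁,…,a_k be positive rationals with notation as before (S_i generated by 1, a₁,…,a_i; G_i its group; q_i = [G_i : G_{i−1}]), and suppose additionally a_{i+1} > q_i·a_i for all 1 ≤ i ≤ k−1. Then |S_i ∩ [n−1, n)| = q₁⋯q_i for all integers n ≥ q_i·a_i. -/
/-
Each `G_i` is cyclic, namely `(1 / (q₁⋯q_i)) ℤ`, and `q_i • a_i ∈ G_{i-1}` since `q_i` is the index.
Dividing the coefficient of `a_i` by `q_i` with remainder therefore writes every element of `G_i` as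
an integer plus an element of `S_i` of size at most `(q₁ - 1) a₁ + ⋯ + (q_i - 1) a_i`, which the
growth condition makes smaller than `q_i a_i ≤ n`. So `S_i` and `G_i` meet `[n - 1, n)` in the same
set, namely in `q₁⋯q_i` points.
-/

open AddSubgroup

theorem AddSubgroup.closure_addSubmonoidClosure {A : Type*} [AddGroup A] (s : Set A) :
    closure (AddSubmonoid.closure s : Set A) = closure s :=
  le_antisymm ((closure_le _).2 <| AddSubmonoid.closure_le.2 subset_closure)
    (closure_mono AddSubmonoid.subset_closure)

theorem AddSubgroup.exists_add_nsmul_of_mem_sup_zmultiples {A : Type*} [AddCommGroup A]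
    {H : AddSubgroup A} {a x : A} {s : ℕ} (hs : 0 < s) (hsa : s • a ∈ H)
    (hx : x ∈ H ⊔ zmultiples a) : ∃ h ∈ H, ∃ l < s, x = h + l • a := by
  obtain ⟨h, hh, _, ⟨m, rfl⟩, rfl⟩ := mem_sup.1 hx
  obtain ⟨l, hl⟩ := Int.eq_ofNat_of_zero_le (Int.emod_nonneg m (by omega : (s : ℤ) ≠ 0))
  have hls : m % s < s := Int.emod_lt_of_pos m (by omega)
  refine ⟨h + (m / s) • s • a, add_mem hh (zsmul_mem hsa _), l, by omega, ?_⟩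
  simp only [← natCast_zsmul, ← hl, smul_smul, add_assoc, ← add_zsmul, Int.ediv_mul_add_emod]

theorem AddSubgroup.relIndex_zmultiples_nsmul {A : Type*} [AddCommGroup A] [IsAddTorsionFree A]
    {g : A} (hg : g ≠ 0) (n : ℕ) : (zmultiples (n • g)).relIndex (zmultiples g) = n := by
  have hcomap : (zmultiples (n • g)).comap (zmultiplesHom A g) = zmultiples (n : ℤ) := by
    ext m
    simp only [mem_comap, zmultiplesHom_apply, mem_zmultiples_iff, ← natCast_zsmul, smul_smul,
      smul_eq_mul]
    refine exists_congr fun k => ?_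
    rw [← sub_eq_zero, ← sub_smul, IsAddTorsionFree.zsmul_eq_zero_iff_left hg, sub_eq_zero,
      mul_comm]
  rw [← range_zmultiplesHom g, ← index_comap, hcomap, Int.index_zmultiples, Int.natAbs_natCast]

theorem Rat.zmultiples_one_sup_zmultiples (b : ℚ) :
    zmultiples (1 : ℚ) ⊔ zmultiples b = zmultiples (b.den : ℚ)⁻¹ := by
  apply le_antisymm
  · refine sup_le ?_ ?_ <;> rw [zmultiples_le, mem_zmultiples_iff]
    · exact ⟨b.den, by simp⟩
    · exact ⟨b.num, by rw [zsmul_eq_mul, ← div_eq_mul_inv, Rat.num_div_den]⟩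
  · obtain ⟨u, v, huv⟩ : IsCoprime (b.den : ℤ) b.num := by
      rw [Int.isCoprime_iff_gcd_eq_one, Int.gcd_comm]
      exact b.reduced
    have hbezout : (b.den : ℚ)⁻¹ = u • 1 + v • b := by
      have hb : (b.num : ℚ) = b * b.den := (Rat.mul_den_eq_num b).symm
      have huv' : (u : ℚ) * b.den + v * b.num = 1 := by exact_mod_cast huv
      simp only [zsmul_eq_mul]
      field_simp
      linear_combination huv'.symm + v * hb
    rw [zmultiples_le, hbezout]
    exact add_mem (mem_sup_left (zsmul_mem (mem_zmultiples 1) u))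
      (mem_sup_right (zsmul_mem (mem_zmultiples b) v))

theorem Rat.zmultiples_inv_natCast_sup_zmultiples {d : ℕ} (hd : 0 < d) (a : ℚ) :
    zmultiples (d : ℚ)⁻¹ ⊔ zmultiples a = zmultiples ((d * (a * d).den : ℕ) : ℚ)⁻¹ := by
  have := congrArg (map (AddMonoidHom.mulLeft (d : ℚ)⁻¹)) (zmultiples_one_sup_zmultiples (a * d))
  simpa [AddSubgroup.map_sup, AddMonoidHom.map_zmultiples, mul_comm, hd.ne'] using this

theorem Rat.relIndex_zmultiples_inv_natCast_mul {d t : ℕ} (hd : 0 < d) (ht : 0 < t) :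
    (zmultiples (d : ℚ)⁻¹).relIndex (zmultiples ((d * t : ℕ) : ℚ)⁻¹) = t := by
  have hdt : (d : ℚ)⁻¹ = t • ((d * t : ℕ) : ℚ)⁻¹ := by
    have ht' : (t : ℚ) ≠ 0 := by positivity
    rw [nsmul_eq_mul]
    push_cast
    field_simp
  rw [hdt, relIndex_zmultiples_nsmul (by positivity)]

theorem Rat.encard_zmultiples_inv_natCast_inter_Ico {d : ℕ} (hd : 0 < d) (n : ℤ) :
    ((zmultiples (d : ℚ)⁻¹ : Set ℚ) ∩ Set.Ico ((n : ℚ) - 1) n).encard = d := by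
  have hd' : (0 : ℚ) < d := by exact_mod_cast hd
  have himage : (zmultiples (d : ℚ)⁻¹ : Set ℚ) ∩ Set.Ico ((n : ℚ) - 1) n =
      (fun m : ℤ => (m : ℚ) / d) '' Set.Ico (d * (n - 1)) (d * n) := by
    ext x
    simp only [Set.mem_inter_iff, SetLike.mem_coe, mem_zmultiples_iff, zsmul_eq_mul,
      ← div_eq_mul_inv, Set.mem_Ico, Set.mem_image]
    constructor
    · rintro ⟨⟨m, rfl⟩, h1, h2⟩
      rw [le_div_iff₀ hd'] at h1
      rw [div_lt_iff₀ hd'] at h2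
      exact ⟨m, ⟨by exact_mod_cast (by linarith : (d : ℚ) * (n - 1) ≤ m),
        by exact_mod_cast (by linarith : (m : ℚ) < d * n)⟩, rfl⟩
    · rintro ⟨m, ⟨h1, h2⟩, rfl⟩
      have h1' : (d : ℚ) * (n - 1) ≤ m := by exact_mod_cast h1
      have h2' : (m : ℚ) < d * n := by exact_mod_cast h2
      exact ⟨⟨m, rfl⟩, by rw [le_div_iff₀ hd']; linarith, by rw [div_lt_iff₀ hd']; linarith⟩
  have hinj : Set.InjOn (fun m : ℤ => (m : ℚ) / d) (Set.Ico (d * (n - 1)) (d * n)) :=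
    fun m _ m' _ h => by exact_mod_cast (div_left_inj' hd'.ne').1 h
  rw [himage, hinj.encard_image, ← Finset.coe_Ico, Set.encard_coe_eq_coe_finsetCard, Int.card_Ico]
  simp [mul_sub]

theorem sum_sub_one_mul_lt_of_lt_mul {R : Type*} [CommRing R] [LinearOrder R]
    [IsStrictOrderedRing R] {a q : ℕ → R} {i : ℕ} (hi : 1 ≤ i) (ha : 0 < a 1)
    (hgrowth : ∀ j, 1 ≤ j → j < i → q j * a j < a (j + 1)) :
    ∑ j ∈ Finset.Icc 1 i, (q j - 1) * a j < q i * a i := by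
  induction i, hi using Nat.le_induction with
  | base => simpa [sub_mul] using ha
  | succ i hi ih =>
    rw [Finset.sum_Icc_succ_top (by omega)]
    linarith [hgrowth i hi (by omega), ih fun j hj hji => hgrowth j hj (by omega)]

theorem inter_Ico_eq_of_forall_mem_exists_intCast_add {R : Type*} [CommRing R] [LinearOrder R]
    [IsStrictOrderedRing R] {S : AddSubmonoid R} {G : AddSubgroup R} (hSG : S ≤ G.toAddSubmonoid)
    (h1 : (1 : R) ∈ S) {t : R} (hG : ∀ x ∈ G, ∃ c : ℤ, ∃ y ∈ S, x = c + y ∧ y < t) :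
    (S : Set R) ∩ Set.Ico (t - 1) t = (G : Set R) ∩ Set.Ico (t - 1) t := by
  refine subset_antisymm (Set.inter_subset_inter_left _ hSG) ?_
  rintro x ⟨hx, hxt, hxt'⟩
  obtain ⟨c, y, hy, rfl, hyt⟩ := hG x hx
  have hc : 0 ≤ c := by
    by_contra! hc
    have : (c : R) ≤ -1 := by exact_mod_cast Int.le_sub_one_of_lt hc
    linarith
  lift c to ℕ using hc
  refine ⟨?_, hxt, hxt'⟩
  rw [Int.cast_natCast, ← nsmul_one]
  exact add_mem (nsmul_mem h1 c) hy

def generators (a : ℕ → ℚ) (i : ℕ) : Set ℚ := {1} ∪ a '' Set.Icc 1 i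

theorem generators_zero (a : ℕ → ℚ) : generators a 0 = {1} := by
  simp [generators]

theorem generators_succ (a : ℕ → ℚ) (i : ℕ) :
    generators a (i + 1) = generators a i ∪ {a (i + 1)} := by
  rw [generators, generators, ← Order.succ_eq_add_one, Order.Icc_succ_right (by simp),
    Set.image_insert_eq, Set.union_insert, Set.insert_eq, Set.union_comm]

theorem generators_mono (a : ℕ → ℚ) : Monotone (generators a) :=
  fun _ _ hij => Set.union_subset_union_right _ <| Set.image_mono <| Set.Icc_subset_Icc_right hij

theorem mem_generators_self (a : ℕ → ℚ) {i : ℕ} (hi : 1 ≤ i) : a i ∈ generators a i :=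
  Or.inr ⟨i, ⟨hi, le_rfl⟩, rfl⟩

theorem closure_generators_zero (a : ℕ → ℚ) :
    AddSubgroup.closure (generators a 0) = zmultiples 1 := by
  rw [generators_zero, zmultiples_eq_closure]

theorem closure_generators_succ (a : ℕ → ℚ) (i : ℕ) :
    AddSubgroup.closure (generators a (i + 1)) =
      AddSubgroup.closure (generators a i) ⊔ zmultiples (a (i + 1)) := by
  rw [generators_succ, AddSubgroup.closure_union, zmultiples_eq_closure]

theorem closure_generators_eq_zmultiples_inv_prod (a : ℕ → ℚ) {q : ℕ → ℕ}
    (hq : ∀ i, q (i + 1) =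
      (AddSubgroup.closure (generators a i)).relIndex (AddSubgroup.closure (generators a (i + 1))))
    (i : ℕ) :
    0 < ∏ j ∈ Finset.Icc 1 i, q j ∧
      AddSubgroup.closure (generators a i) =
        zmultiples ((∏ j ∈ Finset.Icc 1 i, q j : ℕ) : ℚ)⁻¹ := by
  induction i with
  | zero => simp [closure_generators_zero]
  | succ i ih =>
    obtain ⟨hpos, heq⟩ := ih
    rw [Finset.prod_Icc_succ_top (by omega), hq i, closure_generators_succ, heq,
      Rat.zmultiples_inv_natCast_sup_zmultiples hpos,
      Rat.relIndex_zmultiples_inv_natCast_mul hpos (Rat.den_pos _)]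
    exact ⟨Nat.mul_pos hpos (Rat.den_pos _), rfl⟩

theorem exists_intCast_add_mem_closure_generators (a : ℕ → ℚ) (q : ℕ → ℕ) {i : ℕ}
    (ha : ∀ j < i, 0 ≤ a (j + 1))
    (hq : ∀ j < i, 0 < q (j + 1) ∧ q (j + 1) • a (j + 1) ∈ AddSubgroup.closure (generators a j))
    {x : ℚ} (hx : x ∈ AddSubgroup.closure (generators a i)) :
    ∃ c : ℤ, ∃ y ∈ AddSubmonoid.closure (generators a i),
      x = c + y ∧ y ≤ ∑ j ∈ Finset.Icc 1 i, ((q j : ℚ) - 1) * a j := by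
  induction i generalizing x with
  | zero =>
    rw [closure_generators_zero, mem_zmultiples_iff] at hx
    obtain ⟨c, rfl⟩ := hx
    exact ⟨c, 0, zero_mem _, by simp, by simp⟩
  | succ i ih =>
    rw [closure_generators_succ] at hx
    obtain ⟨hs, hsa⟩ := hq i (by omega)
    obtain ⟨h, hh, l, hl, rfl⟩ := exists_add_nsmul_of_mem_sup_zmultiples hs hsa hx
    obtain ⟨c, y, hy, rfl, hyle⟩ :=
      ih (fun j hj => ha j (by omega)) (fun j hj => hq j (by omega)) hh
    have hl' : (l : ℚ) ≤ q (i + 1) - 1 := by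
      rw [le_sub_iff_add_le]; exact_mod_cast hl
    refine ⟨c, y + l • a (i + 1), add_mem ?_ ?_, by rw [add_assoc], ?_⟩
    · exact AddSubmonoid.closure_mono (generators_mono a (Nat.le_succ i)) hy
    · exact nsmul_mem (AddSubmonoid.subset_closure (mem_generators_self a (by omega))) l
    · rw [Finset.sum_Icc_succ_top (by omega), nsmul_eq_mul]
      gcongr
      exact ha i (by omega)

/-- **Corollary (estimate).** With the same notation, if moreover `a_{i+1} > q_i·a_i` for
`1 ≤ i ≤ k-1`, then `|S_i ∩ [n-1, n)| = q₁⋯q_i` for all integers `n ≥ q_i·a_i`. -/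
theorem density_estimate
    (k : ℕ) (a : ℕ → ℚ) (ha : ∀ i, 1 ≤ i → i ≤ k → 0 < a i)
    (S : ℕ → AddSubmonoid ℚ)
    (hS : ∀ i, S i = AddSubmonoid.closure ({1} ∪ (a '' {j | 1 ≤ j ∧ j ≤ i})))
    (G : ℕ → AddSubgroup ℚ)
    (hG : ∀ i, G i = AddSubgroup.closure (S i : Set ℚ))
    (q : ℕ → ℕ) (hq : ∀ i, 1 ≤ i → q i = (G (i - 1)).relIndex (G i))
    (hgrowth : ∀ i, 1 ≤ i → i ≤ k - 1 → (q i : ℚ) * a i < a (i + 1)) :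
    ∀ i, 1 ≤ i → i ≤ k → ∀ n : ℤ, (q i : ℚ) * a i ≤ (n : ℚ) →
      ((S i : Set ℚ) ∩ Set.Ico ((n : ℚ) - 1) (n : ℚ)).encard =
        ((∏ j ∈ Finset.Icc 1 i, q j : ℕ) : ℕ∞) := by
  intro i hi hik n hn
  have hS' : ∀ i, S i = AddSubmonoid.closure (generators a i) := hS
  have hG' : ∀ i, G i = AddSubgroup.closure (generators a i) := fun i => by
    rw [hG, hS', closure_addSubmonoidClosure]
  have hq' : ∀ j, q (j + 1) = (AddSubgroup.closure (generators a j)).relIndex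
      (AddSubgroup.closure (generators a (j + 1))) := fun j => by
    simpa [hG'] using hq (j + 1) (by omega)
  obtain ⟨hprod, hGi⟩ := closure_generators_eq_zmultiples_inv_prod a hq' i
  have hmem : ∀ j < i,
      0 < q (j + 1) ∧ q (j + 1) • a (j + 1) ∈ AddSubgroup.closure (generators a j) :=
    fun j hj => ⟨Nat.pos_of_ne_zero fun h0 => hprod.ne' (Finset.prod_eq_zero (by simp; omega) h0),
      hq' j ▸ nsmul_relIndex_mem _ (AddSubgroup.subset_closure (mem_generators_self a (by omega)))⟩
  have hbound : ∑ j ∈ Finset.Icc 1 i, ((q j : ℚ) - 1) * a j < q i * a i :=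
    sum_sub_one_mul_lt_of_lt_mul hi (ha 1 le_rfl (by omega)) fun j hj hji => hgrowth j hj (by omega)
  have hrep : ∀ x ∈ AddSubgroup.closure (generators a i),
      ∃ c : ℤ, ∃ y ∈ AddSubmonoid.closure (generators a i), x = c + y ∧ y < n := fun x hx => by
    obtain ⟨c, y, hy, hxy, hy'⟩ := exists_intCast_add_mem_closure_generators a q
      (fun j hj => (ha (j + 1) (by omega) (by omega)).le) hmem hx
    exact ⟨c, y, hy, hxy, by linarith⟩
  have hone : (1 : ℚ) ∈ AddSubmonoid.closure (generators a i) :=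
    AddSubmonoid.subset_closure (Or.inl rfl)
  rw [hS', inter_Ico_eq_of_forall_mem_exists_intCast_add (le_closure_toAddSubmonoid _) hone hrep,
    hGi, Rat.encard_zmultiples_inv_natCast_inter_Ico hprod]
end

section
/- Fix coprime integers 0 < p < q, set r = 2^q, s = 2^p, and let S ⊆ ℚ₊ be the subsemigroup generated by 1 and a_i = r^i + s^{−i} for i ≥ 1. Then (1/(2s²))·n^{1+p/q} < |S ∩ (0,n)| < 3·n^{1+p/q} for all sufficiently large n ∈ ℕ. -/
/-!
With `r = 2^q`, `s = 2^p` and `α = p/q` we have `s = r^α`. A sum of generators below `r^(i+1)`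
only uses `aⱼ` with `j ≤ i`, so it lies in `s^(-i) ℕ`; for `r^i ≤ n < r^(i+1)` this gives at most
`n s^i ≤ n^(1+α)` elements in `(0, n)`. Conversely, splitting off the last base-`s` digit `d` of `k`
writes `k / s^(ℓ+1) = d aₗ₊₁ + k'' / s^ℓ`, so by induction on `ℓ` every `k / s^ℓ ≥ s r^ℓ + 1`
lies in `S`. Taking `ℓ = i - 1` gives about `s^(i-1) n` elements in `(0, n)`, which beats
`n^(1+α) / (2 s²)` since `n^α < s^(i+1)`.
-/

open Set

theorem AddSubsemigroup.nsmul_add_mem {M : Type*} [AddMonoid M] {S : AddSubsemigroup M}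
    {x y : M} (hx : x ∈ S) (hy : y ∈ S) : ∀ d : ℕ, d • x + y ∈ S
  | 0 => by simpa using hy
  | d + 1 => by
    rw [succ_nsmul', add_assoc]
    exact S.add_mem hx (nsmul_add_mem hx hy d)

theorem pow_pow_rpow_div_natCast {x : ℝ} (hx : 0 ≤ x) (p : ℕ) {q : ℕ} (hq : q ≠ 0) (m : ℕ) :
    ((x ^ q) ^ m) ^ ((p : ℝ) / q) = (x ^ p) ^ m := by
  rw [← pow_mul, mul_comm, pow_mul, ← Real.rpow_natCast (x ^ m), ← Real.rpow_mul (by positivity),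
    mul_div_cancel₀ _ (by exact_mod_cast hq), Real.rpow_natCast, ← pow_mul, ← pow_mul, mul_comm]

theorem Nat.exists_pow_succ_le_lt_pow_succ_succ {b n : ℕ} (hb : 1 < b) (hbn : b ≤ n) :
    ∃ ℓ, b ^ (ℓ + 1) ≤ n ∧ n < b ^ (ℓ + 1 + 1) := by
  obtain ⟨ℓ, hℓ⟩ := Nat.exists_eq_add_one_of_ne_zero (Nat.log_pos hb hbn).ne'
  refine ⟨ℓ, ?_, ?_⟩
  · rw [← hℓ]
    exact Nat.pow_log_le_self b (by omega)
  · rw [← hℓ]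
    exact Nat.lt_pow_succ_log_self hb n

theorem rpow_one_add_lt_of_rpow_lt {α s M n : ℝ} (hα₀ : 0 ≤ α) (hα₁ : α ≤ 1) (hs : 2 ≤ s)
    (hM : 0 < M) (hMn : M ≤ n) (hn : 16 ≤ n) (hnα : n ^ α < s * M ^ α) :
    n ^ (1 + α) < 2 * s * M ^ α * (n - M / 2 - 1) := by
  have hMα : 0 < M ^ α := Real.rpow_pos_of_pos hM α
  rw [Real.rpow_add (by linarith), Real.rpow_one]
  -- For `n ≥ 3M/2` the loss `M/2` is at most `n/3`; below that, `n^α ≤ (3/2) M^α` leaves room as `s ≥ 2`.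
  rcases le_or_gt (3 / 2 * M) n with h | h
  · calc n * n ^ α < n * (s * M ^ α) := mul_lt_mul_of_pos_left hnα (by linarith)
      _ ≤ 2 * (n - M / 2 - 1) * (s * M ^ α) :=
        mul_le_mul_of_nonneg_right (by linarith) (by positivity)
      _ = _ := by ring
  · have hnα' : n ^ α ≤ 3 / 2 * M ^ α :=
      calc n ^ α ≤ (3 / 2 * M) ^ α := Real.rpow_le_rpow (by linarith) h.le hα₀
        _ = (3 / 2) ^ α * M ^ α := Real.mul_rpow (by norm_num) hM.le
        _ ≤ 3 / 2 * M ^ α := mul_le_mul_of_nonneg_right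
          (Real.rpow_le_self_of_one_le (by norm_num) hα₁) hMα.le
    calc n * n ^ α ≤ n * (3 / 2 * M ^ α) := mul_le_mul_of_nonneg_left hnα' (by linarith)
      _ < 2 * (n - 2) * M ^ α := by nlinarith
      _ = 2 * M ^ α * (n - 2) := by ring
      _ ≤ 2 * M ^ α * (s * (n - M / 2 - 1)) := by
        refine mul_le_mul_of_nonneg_left ?_ (by positivity : (0 : ℝ) ≤ 2 * M ^ α)
        nlinarith [mul_le_mul_of_nonneg_right hs (by linarith : (0 : ℝ) ≤ n - M / 2 - 1)]
      _ = 2 * s * M ^ α * (n - M / 2 - 1) := by ring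

/-- The `i`-th generator in the range is `a_(i+1) = r^(i+1) + s^(-(i+1))`. -/
def genSemigroup (r s : ℕ) : AddSubsemigroup ℚ :=
  AddSubsemigroup.closure ({1} ∪ range fun i : ℕ => (r : ℚ) ^ (i + 1) + (s : ℚ)⁻¹ ^ (i + 1))

namespace genSemigroup

variable {r s : ℕ}

theorem one_mem : (1 : ℚ) ∈ genSemigroup r s :=
  AddSubsemigroup.subset_closure (Or.inl rfl)

theorem generator_mem (i : ℕ) : (r : ℚ) ^ (i + 1) + (s : ℚ)⁻¹ ^ (i + 1) ∈ genSemigroup r s :=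
  AddSubsemigroup.subset_closure (Or.inr ⟨i, rfl⟩)

theorem natCast_mem {k : ℕ} (hk : k ≠ 0) : (k : ℚ) ∈ genSemigroup r s := by
  obtain ⟨k, rfl⟩ := Nat.exists_eq_succ_of_ne_zero hk
  simpa using AddSubsemigroup.nsmul_add_mem one_mem one_mem k

theorem pos_of_mem (hr : 0 < r) {x : ℚ} (hx : x ∈ genSemigroup r s) : 0 < x := by
  induction hx using AddSubsemigroup.closure_induction with
  | mem x hx => rcases hx with rfl | ⟨i, rfl⟩ <;> positivity
  | add x y _ _ hx hy => exact add_pos hx hy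

theorem exists_mul_pow_eq_natCast (hr : 1 < r) (hs : s ≠ 0) {i : ℕ} {x : ℚ}
    (hx : x ∈ genSemigroup r s) (hxi : x < (r : ℚ) ^ (i + 1)) : ∃ k : ℕ, x * s ^ i = k := by
  have hr₀ : 0 < r := by omega
  induction hx using AddSubsemigroup.closure_induction with
  | mem x hx =>
    rcases hx with rfl | ⟨j, rfl⟩
    · exact ⟨s ^ i, by push_cast; ring⟩
    · have hj : j < i := by
        have : (r : ℚ) ^ (j + 1) < (r : ℚ) ^ (i + 1) := by
          refine lt_of_le_of_lt (le_add_of_nonneg_right ?_) hxi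
          positivity
        have := (pow_lt_pow_iff_right₀ (by exact_mod_cast hr)).mp this
        omega
      obtain ⟨m, rfl⟩ := Nat.exists_eq_add_of_lt hj
      refine ⟨r ^ (j + 1) * s ^ (j + m + 1) + s ^ m, ?_⟩
      push_cast
      rw [inv_pow]
      field_simp
      ring
  | add x y hx hy ihx ihy =>
    obtain ⟨k, hk⟩ := ihx (lt_of_le_of_lt (le_add_of_nonneg_right (pos_of_mem hr₀ hy).le) hxi)
    obtain ⟨l, hl⟩ := ihy (lt_of_le_of_lt (le_add_of_nonneg_left (pos_of_mem hr₀ hx).le) hxi)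
    exact ⟨k + l, by push_cast; rw [add_mul, hk, hl]⟩

theorem natCast_div_pow_mem (hs : 1 ≤ s) (hsr : s ≤ r) :
    ∀ ℓ k : ℕ, s ^ ℓ * (s * r ^ ℓ + 1) ≤ k → (k : ℚ) / s ^ ℓ ∈ genSemigroup r s
  | 0, k, hk => by
    rw [pow_zero, one_mul, pow_zero, mul_one] at hk
    simpa using natCast_mem (r := r) (s := s) (by omega : k ≠ 0)
  | ℓ + 1, k, hk => by
    obtain ⟨k', d, hd, rfl⟩ : ∃ k' d, d < s ∧ k = s * k' + d :=
      ⟨k / s, k % s, Nat.mod_lt _ hs, (Nat.div_add_mod k s).symm⟩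
    obtain ⟨k'', hk'', rfl⟩ : ∃ k'', s ^ ℓ * (s * r ^ ℓ + 1) ≤ k'' ∧
        k' = d * (r ^ (ℓ + 1) * s ^ ℓ) + k'' := by
      have hX : s ^ ℓ * (s * r ^ (ℓ + 1) + 1) ≤ k' := by
        have : s * (s ^ ℓ * (s * r ^ (ℓ + 1) + 1)) < s * (k' + 1) := by
          rw [pow_succ] at hk
          nlinarith
        exact Nat.lt_succ_iff.mp (Nat.lt_of_mul_lt_mul_left this)
      have : d * (r ^ (ℓ + 1) * s ^ ℓ) + s ^ ℓ * (s * r ^ ℓ + 1) ≤ k' := by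
        rw [pow_succ] at hX ⊢
        nlinarith [Nat.mul_le_mul_right (r ^ ℓ * r * s ^ ℓ) (Nat.succ_le_of_lt hd),
          Nat.mul_le_mul_right (r ^ ℓ * s ^ ℓ) hsr]
      exact ⟨k' - d * (r ^ (ℓ + 1) * s ^ ℓ), by omega, by omega⟩
    have hsplit : ((s * (d * (r ^ (ℓ + 1) * s ^ ℓ) + k'') + d : ℕ) : ℚ) / s ^ (ℓ + 1) =
        d • ((r : ℚ) ^ (ℓ + 1) + (s : ℚ)⁻¹ ^ (ℓ + 1)) + k'' / s ^ ℓ := by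
      have : (s : ℚ) ≠ 0 := by positivity
      rw [nsmul_eq_mul, inv_pow]
      push_cast
      field_simp
      ring
    rw [hsplit]
    exact AddSubsemigroup.nsmul_add_mem (generator_mem ℓ) (natCast_div_pow_mem hs hsr ℓ k'' hk'') d

theorem inter_Ioo_subset_image_range (hr : 1 < r) (hs : s ≠ 0) {n i : ℕ}
    (hn : n ≤ r ^ (i + 1)) :
    (genSemigroup r s : Set ℚ) ∩ Ioo 0 n ⊆
      (Finset.image (fun k : ℕ => (k : ℚ) / s ^ i) (Finset.range (n * s ^ i)) : Set ℚ) := by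
  rintro x ⟨hxS, hx₀, hxn⟩
  have hsi : (0 : ℚ) < s ^ i := by positivity
  obtain ⟨k, hk⟩ := exists_mul_pow_eq_natCast hr hs hxS
    (hxn.trans_le (by exact_mod_cast hn))
  refine Finset.mem_image.mpr ⟨k, Finset.mem_range.mpr ?_, ?_⟩
  · have : x * s ^ i < n * s ^ i := mul_lt_mul_of_pos_right hxn hsi
    rw [hk] at this
    exact_mod_cast this
  · rw [← hk, mul_div_cancel_right₀ _ hsi.ne']

theorem finite_inter_Ioo (hr : 1 < r) (hs : s ≠ 0) (n : ℕ) :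
    ((genSemigroup r s : Set ℚ) ∩ Ioo 0 n).Finite :=
  (Finset.finite_toSet _).subset
    (inter_Ioo_subset_image_range hr hs (Nat.lt_pow_succ_log_self hr n).le)

theorem ncard_inter_Ioo_le (hr : 1 < r) (hs : s ≠ 0) {n i : ℕ} (hn : n ≤ r ^ (i + 1)) :
    ((genSemigroup r s : Set ℚ) ∩ Ioo 0 n).ncard ≤ n * s ^ i :=
  calc _ ≤ (Finset.image (fun k : ℕ => (k : ℚ) / s ^ i) (Finset.range (n * s ^ i))).card := by
        rw [← Set.ncard_coe_finset]
        exact Set.ncard_le_ncard (inter_Ioo_subset_image_range hr hs hn) (Finset.finite_toSet _)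
    _ ≤ n * s ^ i := Finset.card_image_le.trans (Finset.card_range _).le

theorem mul_le_ncard_inter_Ioo_add (hr : 1 < r) (hs : 1 ≤ s) (hsr : s ≤ r) (n ℓ : ℕ) :
    s ^ ℓ * n ≤ ((genSemigroup r s : Set ℚ) ∩ Ioo 0 n).ncard + s ^ ℓ * (s * r ^ ℓ + 1) := by
  set f : ℕ → ℚ := fun k => k / s ^ ℓ
  have hsℓ : (0 : ℚ) < s ^ ℓ := by positivity
  have hinj : Set.InjOn f (Finset.Ico (s ^ ℓ * (s * r ^ ℓ + 1)) (s ^ ℓ * n) : Set ℕ) :=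
    fun a _ b _ hab => by exact_mod_cast (div_left_inj' hsℓ.ne').mp hab
  have hsub : (Finset.image f (Finset.Ico (s ^ ℓ * (s * r ^ ℓ + 1)) (s ^ ℓ * n)) : Set ℚ) ⊆
      (genSemigroup r s : Set ℚ) ∩ Ioo 0 n := by
    intro x hx
    obtain ⟨k, hk, rfl⟩ := Finset.mem_image.mp hx
    obtain ⟨hk₁, hk₂⟩ := Finset.mem_Ico.mp hk
    refine ⟨natCast_div_pow_mem hs hsr ℓ k hk₁, ?_, ?_⟩
    · have : 0 < k := lt_of_lt_of_le (by positivity) hk₁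
      positivity
    · rw [div_lt_iff₀ hsℓ, mul_comm]
      exact_mod_cast hk₂
  have := Set.ncard_le_ncard hsub (finite_inter_Ioo hr (by omega) n)
  rw [Set.ncard_coe_finset, Finset.card_image_of_injOn hinj, Nat.card_Ico] at this
  omega

theorem lt_ncard_inter_Ioo {p q n ℓ : ℕ} (hp : 0 < p) (hpq : p < q) (hn : 16 ≤ n)
    (hlo : (2 ^ q) ^ (ℓ + 1) ≤ n) (hhi : n < (2 ^ q) ^ (ℓ + 1 + 1)) :
    1 / (2 * ((2 : ℝ) ^ p) ^ 2) * (n : ℝ) ^ (1 + (p : ℝ) / q) <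
      (((genSemigroup (2 ^ q) (2 ^ p) : Set ℚ) ∩ Ioo 0 (n : ℚ)).ncard : ℝ) := by
  have hr : 1 < 2 ^ q := Nat.one_lt_two_pow (by omega)
  have hsr : 2 * 2 ^ p ≤ 2 ^ q := by
    rw [← pow_succ']
    exact Nat.pow_le_pow_right (by norm_num) hpq
  have hpow := pow_pow_rpow_div_natCast (x := 2) zero_le_two p (by omega : q ≠ 0)
  set α : ℝ := (p : ℝ) / q
  have hα₀ : 0 < α := div_pos (by exact_mod_cast hp) (by exact_mod_cast hp.trans hpq)
  have hα₁ : α ≤ 1 := div_le_one_of_le₀ (by exact_mod_cast hpq.le) (by positivity)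
  have hnα : (n : ℝ) ^ α < 2 ^ p * (((2 : ℝ) ^ q) ^ (ℓ + 1)) ^ α := by
    rw [hpow, ← pow_succ', ← hpow]
    exact Real.rpow_lt_rpow (by positivity) (by exact_mod_cast hhi) hα₀
  have hgrowth := rpow_one_add_lt_of_rpow_lt hα₀.le hα₁
    (by exact_mod_cast Nat.le_self_pow hp.ne' 2) (by positivity)
    (by exact_mod_cast hlo) (by exact_mod_cast hn) hnα
  rw [hpow] at hgrowth
  have hcount : ((2 : ℝ) ^ p) ^ ℓ * n ≤
      (((genSemigroup (2 ^ q) (2 ^ p) : Set ℚ) ∩ Ioo 0 (n : ℚ)).ncard : ℝ) +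
        ((2 : ℝ) ^ p) ^ ℓ * (2 ^ p * ((2 : ℝ) ^ q) ^ ℓ + 1) := by
    exact_mod_cast mul_le_ncard_inter_Ioo_add hr Nat.one_le_two_pow (by omega) n ℓ
  have hM : 2 ^ p * ((2 : ℝ) ^ q) ^ ℓ ≤ ((2 : ℝ) ^ q) ^ (ℓ + 1) / 2 := by
    have hsr' : (2 * 2 ^ p : ℝ) ≤ 2 ^ q := by exact_mod_cast hsr
    rw [pow_succ, le_div_iff₀ two_pos]
    nlinarith [mul_le_mul_of_nonneg_left hsr' (by positivity : (0 : ℝ) ≤ ((2 : ℝ) ^ q) ^ ℓ)]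
  calc 1 / (2 * ((2 : ℝ) ^ p) ^ 2) * (n : ℝ) ^ (1 + α)
      < 1 / (2 * ((2 : ℝ) ^ p) ^ 2) *
          (2 * 2 ^ p * ((2 : ℝ) ^ p) ^ (ℓ + 1) * (n - ((2 : ℝ) ^ q) ^ (ℓ + 1) / 2 - 1)) :=
        mul_lt_mul_of_pos_left hgrowth (by positivity)
    _ = ((2 : ℝ) ^ p) ^ ℓ * (n - ((2 : ℝ) ^ q) ^ (ℓ + 1) / 2 - 1) := by
        field_simp
        ring
    _ ≤ ((2 : ℝ) ^ p) ^ ℓ * (n - (2 ^ p * ((2 : ℝ) ^ q) ^ ℓ + 1)) :=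
        mul_le_mul_of_nonneg_left (by linarith) (by positivity)
    _ ≤ _ := by linarith

theorem ncard_inter_Ioo_lt {p q n ℓ : ℕ} (hpq : p < q) (hn : 0 < n)
    (hlo : (2 ^ q) ^ (ℓ + 1) ≤ n) (hhi : n < (2 ^ q) ^ (ℓ + 1 + 1)) :
    (((genSemigroup (2 ^ q) (2 ^ p) : Set ℚ) ∩ Ioo 0 (n : ℚ)).ncard : ℝ) <
      3 * (n : ℝ) ^ (1 + (p : ℝ) / q) := by
  have hr : 1 < 2 ^ q := Nat.one_lt_two_pow (by omega)
  have hpow := pow_pow_rpow_div_natCast (x := 2) zero_le_two p (by omega : q ≠ 0)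
  have hn₀ : (0 : ℝ) < n := by exact_mod_cast (by omega : 0 < n)
  have hcard : (((genSemigroup (2 ^ q) (2 ^ p) : Set ℚ) ∩ Ioo 0 (n : ℚ)).ncard : ℝ) ≤
      n * ((2 : ℝ) ^ p) ^ (ℓ + 1) := by
    exact_mod_cast ncard_inter_Ioo_le hr (by positivity) hhi.le
  have hsα : ((2 : ℝ) ^ p) ^ (ℓ + 1) ≤ (n : ℝ) ^ ((p : ℝ) / q) := by
    rw [← hpow]
    exact Real.rpow_le_rpow (by positivity) (by exact_mod_cast hlo) (by positivity)
  calc _ ≤ n * ((2 : ℝ) ^ p) ^ (ℓ + 1) := hcard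
    _ ≤ n * (n : ℝ) ^ ((p : ℝ) / q) := mul_le_mul_of_nonneg_left hsα hn₀.le
    _ = (n : ℝ) ^ (1 + (p : ℝ) / q) := by rw [Real.rpow_add hn₀, Real.rpow_one]
    _ < 3 * (n : ℝ) ^ (1 + (p : ℝ) / q) := by
        linarith [Real.rpow_pos_of_pos hn₀ (1 + (p : ℝ) / q)]

end genSemigroup

theorem example_n_alpha_growth_general
    (p q : ℕ) (hp : 0 < p) (hpq : p < q)
    (S : AddSubsemigroup ℚ)
    (hS : S = AddSubsemigroup.closure
      ({1} ∪ Set.range (fun i : ℕ =>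
        ((2 : ℚ) ^ q) ^ (i + 1) + ((1 / 2 : ℚ) ^ p) ^ (i + 1)))) :
    ∃ N : ℕ, ∀ n : ℕ, N ≤ n →
      ((S : Set ℚ) ∩ Set.Ioo 0 (n : ℚ)).Finite ∧
      (1 / (2 * ((2 : ℝ) ^ p) ^ 2)) * (n : ℝ) ^ ((1 : ℝ) + (p : ℝ) / (q : ℝ)) <
        (((S : Set ℚ) ∩ Set.Ioo 0 (n : ℚ)).ncard : ℝ) ∧
      (((S : Set ℚ) ∩ Set.Ioo 0 (n : ℚ)).ncard : ℝ) <
        3 * (n : ℝ) ^ ((1 : ℝ) + (p : ℝ) / (q : ℝ)) := by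
  obtain rfl : S = genSemigroup (2 ^ q) (2 ^ p) := by
    rw [hS, genSemigroup]
    push_cast
    simp only [one_div, inv_pow]
  have hr : 1 < 2 ^ q := Nat.one_lt_two_pow (by omega)
  refine ⟨2 ^ q + 16, fun n hn => ?_⟩
  obtain ⟨ℓ, hlo, hhi⟩ := Nat.exists_pow_succ_le_lt_pow_succ_succ hr (by omega : 2 ^ q ≤ n)
  exact ⟨genSemigroup.finite_inter_Ioo hr (by positivity) n,
    genSemigroup.lt_ncard_inter_Ioo hp hpq (by omega) hlo hhi,
    genSemigroup.ncard_inter_Ioo_lt hpq (by omega) hlo hhi⟩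

/-- **Example (n^(1+p/q) growth).** Fix coprime `0 < p < q`, `r = 2^q`, `s = 2^p`, and let
`S ⊆ ℚ₊` be the subsemigroup generated by `1` and `aᵢ = r^i + s^{-i}` for `i ≥ 1`. Then
`(1/(2s²))·n^{1+p/q} < |S ∩ (0,n)| < 3·n^{1+p/q}` for all sufficiently large `n`. -/
theorem example_n_alpha_growth
    (p q : ℕ) (hp : 0 < p) (hpq : p < q) (hcop : Nat.Coprime p q)
    (S : AddSubsemigroup ℚ)
    (hS : S = AddSubsemigroup.closure
      ({1} ∪ Set.range (fun i : ℕ =>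
        ((2 : ℚ) ^ q) ^ (i + 1) + ((1 / 2 : ℚ) ^ p) ^ (i + 1)))) :
    ∃ N : ℕ, ∀ n : ℕ, N ≤ n →
      ((S : Set ℚ) ∩ Set.Ioo 0 (n : ℚ)).Finite ∧
      (1 / (2 * ((2 : ℝ) ^ p) ^ 2)) * (n : ℝ) ^ ((1 : ℝ) + (p : ℝ) / (q : ℝ)) <
        (((S : Set ℚ) ∩ Set.Ioo 0 (n : ℚ)).ncard : ℝ) ∧
      (((S : Set ℚ) ∩ Set.Ioo 0 (n : ℚ)).ncard : ℝ) <
        3 * (n : ℝ) ^ ((1 : ℝ) + (p : ℝ) / (q : ℝ)) :=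
  example_n_alpha_growth_general p q hp hpq S hS
end
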